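/- Let O be the valuation ring of a finite extension K/ℚ_p with maximal ideal M, residue field F_q, and let F(x,y) be the Lubin–Tate formal group over O with [Π]_F(x) = Πx + x^q for a uniformizer Π. Let ζ, μ be commuting endomorphisms of the reduction (ζ noninvertible with ζ(x) = ẑ(x^{q^s}) for an invertible ẑ, μ invertible). If (d, w) ∈ Z_r(ζ, μ) satisfies d(x) = -θ(ζ(x)) for some θ ∈ x²·M_r[[x]], then w(x) = μ'(x)·θ(x) - θ(μ(x)), where Z_r(ζ,μ) = {(d,w) : d(μ(x)) = d(x)·μ'(ζ(x)) + w(ζ(x))} and M_r = M^r/M^{r+1}. -/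

import Mathlib

open PowerSeries

/-- Composition `f ∘ g` of formal power series (substitution of `g`, with zero constant
term, into `f`): `(psComp f g)(x) = f(g(x))`. -/
noncomputable def psComp {R : Type*} [CommRing R] (f g : PowerSeries R) : PowerSeries R :=
  PowerSeries.mk fun n =>
    ∑ k ∈ Finset.range (n + 1), PowerSeries.coeff k f * PowerSeries.coeff n (g ^ k)

section Aux

variable {R : Type*} [CommRing R]

lemma coeff_psComp (f g : PowerSeries R) (n : ℕ) :
    PowerSeries.coeff n (psComp f g) =
      ∑ k ∈ Finset.range (n + 1), PowerSeries.coeff k f * PowerSeries.coeff n (g ^ k) := by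
  simp [psComp]

lemma coeff_pow_eq_zero {g : PowerSeries R} (hg : PowerSeries.constantCoeff g = 0)
    {n l : ℕ} (h : n < l) : PowerSeries.coeff n (g ^ l) = 0 := by
  have hX : (PowerSeries.X : PowerSeries R) ∣ g := PowerSeries.X_dvd_iff.mpr hg
  have hXl : (PowerSeries.X : PowerSeries R) ^ l ∣ g ^ l := pow_dvd_pow_of_dvd hX l
  exact (PowerSeries.X_pow_dvd_iff.mp hXl) n h

/-- Extension of the defining sum beyond `n + 1`, when `g` has zero constant term. -/
lemma coeff_psComp_of_lt {g : PowerSeries R} (hg : PowerSeries.constantCoeff g = 0)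
    (f : PowerSeries R) {n m : ℕ} (h : n < m) :
    PowerSeries.coeff n (psComp f g) =
      ∑ k ∈ Finset.range m, PowerSeries.coeff k f * PowerSeries.coeff n (g ^ k) := by
  rw [coeff_psComp]
  apply Finset.sum_subset (Finset.range_subset_range.mpr (by omega))
  intro k hk hk'
  simp only [Finset.mem_range, not_lt] at hk'
  rw [coeff_pow_eq_zero hg (by omega), mul_zero]

lemma constantCoeff_psComp (f g : PowerSeries R) :
    PowerSeries.constantCoeff (psComp f g) = PowerSeries.constantCoeff f := by
  rw [← PowerSeries.coeff_zero_eq_constantCoeff_apply, coeff_psComp,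
    ← PowerSeries.coeff_zero_eq_constantCoeff_apply]
  rw [Finset.range_one, Finset.sum_singleton, pow_zero, PowerSeries.coeff_one,
    if_pos rfl, mul_one]

lemma psComp_neg (f g : PowerSeries R) : psComp (-f) g = -psComp f g := by
  ext n
  simp [coeff_psComp, Finset.sum_neg_distrib]

lemma psComp_sub (f₁ f₂ g : PowerSeries R) : psComp (f₁ - f₂) g = psComp f₁ g - psComp f₂ g := by
  ext n
  simp [coeff_psComp, sub_mul, Finset.sum_sub_distrib]

lemma coeff_eval₂ {g : PowerSeries R} (hg : PowerSeries.constantCoeff g = 0)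
    (P : Polynomial R) (n : ℕ) :
    PowerSeries.coeff n (P.eval₂ (PowerSeries.C (R := R)) g) =
      ∑ k ∈ Finset.range (n + 1), P.coeff k * PowerSeries.coeff n (g ^ k) := by
  set m := max (P.natDegree + 1) (n + 1) with hm
  have hdeg : P.natDegree < m := by omega
  rw [Polynomial.eval₂_eq_sum_range' _ hdeg, map_sum]
  have : ∀ k ∈ Finset.range m,
      PowerSeries.coeff n (PowerSeries.C (P.coeff k) * g ^ k)
        = P.coeff k * PowerSeries.coeff n (g ^ k) := by
    intro k _
    rw [PowerSeries.coeff_C_mul]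
  rw [Finset.sum_congr rfl this]
  symm
  apply Finset.sum_subset (Finset.range_subset_range.mpr (by omega))
  intro k hk hk'
  simp only [Finset.mem_range, not_lt] at hk'
  rw [coeff_pow_eq_zero hg (by omega), mul_zero]

/-- `psComp f g` agrees at coefficient `n` with the evaluation of any polynomial agreeing
with `f` up to degree `n`. -/
lemma coeff_psComp_eq_eval₂ {g : PowerSeries R} (hg : PowerSeries.constantCoeff g = 0)
    {f : PowerSeries R} {P : Polynomial R} {n : ℕ}
    (hP : ∀ i ≤ n, P.coeff i = PowerSeries.coeff i f) :
    PowerSeries.coeff n (psComp f g) = PowerSeries.coeff n (P.eval₂ (PowerSeries.C (R := R)) g) := by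
  rw [coeff_psComp, coeff_eval₂ hg]
  refine Finset.sum_congr rfl fun k hk => ?_
  rw [hP k (by simpa using Nat.lt_succ_iff.mp (Finset.mem_range.mp hk))]

lemma coeff_trunc_eq {f : PowerSeries R} {n i : ℕ} (h : i ≤ n) :
    (PowerSeries.trunc (n + 1) f).coeff i = PowerSeries.coeff i f := by
  rw [PowerSeries.coeff_trunc, if_pos (by omega)]

lemma psComp_mul {g : PowerSeries R} (hg : PowerSeries.constantCoeff g = 0)
    (a b : PowerSeries R) : psComp (a * b) g = psComp a g * psComp b g := by
  ext n
  set Pa := PowerSeries.trunc (n + 1) a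
  set Pb := PowerSeries.trunc (n + 1) b
  have hPab : ∀ i ≤ n, (Pa * Pb).coeff i = PowerSeries.coeff i (a * b) := by
    intro i hi
    rw [Polynomial.coeff_mul, PowerSeries.coeff_mul]
    refine Finset.sum_congr rfl fun p hp => ?_
    have hp1 : p.1 ≤ n := by
      have := Finset.HasAntidiagonal.antidiagonal.fst_le hp; omega
    have hp2 : p.2 ≤ n := by
      have := Finset.HasAntidiagonal.antidiagonal.snd_le hp; omega
    rw [coeff_trunc_eq hp1, coeff_trunc_eq hp2]
  rw [coeff_psComp_eq_eval₂ hg hPab, Polynomial.eval₂_mul]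
  rw [PowerSeries.coeff_mul, PowerSeries.coeff_mul]
  refine Finset.sum_congr rfl fun p hp => ?_
  have hp1 : p.1 ≤ n := by have := Finset.HasAntidiagonal.antidiagonal.fst_le hp; omega
  have hp2 : p.2 ≤ n := by have := Finset.HasAntidiagonal.antidiagonal.snd_le hp; omega
  rw [coeff_psComp_eq_eval₂ hg (P := Pa) (fun i hi => coeff_trunc_eq (hi.trans hp1)),
    coeff_psComp_eq_eval₂ hg (P := Pb) (fun i hi => coeff_trunc_eq (hi.trans hp2))]

lemma psComp_one (g : PowerSeries R) : psComp (1 : PowerSeries R) g = 1 := by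
  ext n
  rw [coeff_psComp]
  rw [Finset.sum_eq_single 0]
  · simp
  · intro k hk hk0
    rw [PowerSeries.coeff_one, if_neg hk0, zero_mul]
  · simp

lemma psComp_pow {g : PowerSeries R} (hg : PowerSeries.constantCoeff g = 0)
    (a : PowerSeries R) (j : ℕ) : psComp (a ^ j) g = (psComp a g) ^ j := by
  induction j with
  | zero => simpa using psComp_one g
  | succ j ih => rw [pow_succ, pow_succ, psComp_mul hg, ih]

lemma psComp_assoc {ζ μ : PowerSeries R} (hζ : PowerSeries.constantCoeff ζ = 0)
    (hμ : PowerSeries.constantCoeff μ = 0) (θ : PowerSeries R) :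
    psComp (psComp θ ζ) μ = psComp θ (psComp ζ μ) := by
  ext n
  rw [coeff_psComp, coeff_psComp]
  have step : ∀ k ∈ Finset.range (n + 1),
      PowerSeries.coeff k (psComp θ ζ) * PowerSeries.coeff n (μ ^ k)
        = ∑ j ∈ Finset.range (n + 1),
            PowerSeries.coeff j θ * (PowerSeries.coeff k (ζ ^ j)
              * PowerSeries.coeff n (μ ^ k)) := by
    intro k hk
    rw [coeff_psComp_of_lt hζ θ (Finset.mem_range.mp hk), Finset.sum_mul]
    simp [mul_assoc]
  rw [Finset.sum_congr rfl step, Finset.sum_comm]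
  refine Finset.sum_congr rfl fun j hj => ?_
  rw [← Finset.mul_sum]
  congr 1
  have : (∑ k ∈ Finset.range (n + 1),
      PowerSeries.coeff k (ζ ^ j) * PowerSeries.coeff n (μ ^ k))
      = PowerSeries.coeff n (psComp (ζ ^ j) μ) := by
    rw [coeff_psComp]
  rw [this, psComp_pow hμ]

end Aux

section Inj

variable {K : Type*} [Field K]

/-- Substitution by a nonzero series with zero constant term is injective. -/
lemma psComp_eq_zero {g : PowerSeries K} (hg0 : PowerSeries.constantCoeff g = 0)
    (hgne : g ≠ 0) {f : PowerSeries K} (h : psComp f g = 0) : f = 0 := by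
  -- let m be the order of g
  have hex : ∃ m, PowerSeries.coeff m g ≠ 0 := by
    by_contra hc
    push_neg at hc
    exact hgne (PowerSeries.ext fun n => by simpa using hc n)
  classical
  set m := Nat.find hex with hmdef
  have hgm : PowerSeries.coeff m g ≠ 0 := Nat.find_spec hex
  have hmin : ∀ i < m, PowerSeries.coeff i g = 0 := by
    intro i hi
    by_contra hc
    have h2 : m ≤ i := by rw [hmdef]; exact Nat.find_le hc
    omega
  have hm1 : 1 ≤ m := by
    rcases Nat.eq_zero_or_pos m with h0 | h' 
    · exfalso
      apply hgm
      rw [h0, PowerSeries.coeff_zero_eq_constantCoeff_apply, hg0]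
    · exact h'
  obtain ⟨u, hu⟩ : (PowerSeries.X : PowerSeries K) ^ m ∣ g :=
    PowerSeries.X_pow_dvd_iff.mpr hmin
  have hu0 : PowerSeries.constantCoeff u = PowerSeries.coeff m g := by
    rw [← PowerSeries.coeff_zero_eq_constantCoeff_apply]
    have := PowerSeries.coeff_X_pow_mul u m 0
    rw [zero_add] at this
    rw [← this, ← hu]
  -- key: coeff (a*m) (g^a) = (coeff m g)^a
  have hlead : ∀ a : ℕ, PowerSeries.coeff (a * m) (g ^ a) = (PowerSeries.coeff m g) ^ a := by
    intro a
    have h1 : g ^ a = PowerSeries.X ^ (m * a) * u ^ a := by rw [hu, mul_pow, ← pow_mul]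
    have h2 := PowerSeries.coeff_X_pow_mul (u ^ a) (m * a) 0
    rw [zero_add] at h2
    rw [h1, mul_comm a m, h2, PowerSeries.coeff_zero_eq_constantCoeff_apply, map_pow, hu0]
  have hhigh : ∀ a k : ℕ, a < k → PowerSeries.coeff (a * m) (g ^ k) = 0 := by
    intro a k hak
    have hXk : (PowerSeries.X : PowerSeries K) ^ (k * m) ∣ g ^ k := by
      rw [hu, mul_pow, ← pow_mul, mul_comm m k]
      exact Dvd.intro _ rfl
    exact PowerSeries.X_pow_dvd_iff.mp hXk _
      ((Nat.mul_lt_mul_right (show 0 < m by omega)).mpr hak)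
  ext a
  induction a using Nat.strong_induction_on with
  | _ a ih =>
    have hc : PowerSeries.coeff (a * m) (psComp f g) = 0 := by rw [h, map_zero]
    rw [coeff_psComp_of_lt hg0 f (show a * m < a * m + a + 1 by omega)] at hc
    rw [Finset.sum_eq_single a] at hc
    · rw [hlead] at hc
      rcases mul_eq_zero.mp hc with h' | h'
      · simpa using h'
      · exact absurd h' (pow_ne_zero _ hgm)
    · intro k hk hka
      rcases Nat.lt_or_ge k a with hlt | hge
      · rw [ih k hlt]
        simp
      · rw [hhigh a k (by omega), mul_zero]
    · intro ha
      exfalso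
      apply ha
      simp only [Finset.mem_range]
      omega

end Inj

/-- Work over the residue field `k = 𝔽_q` (so coefficients lie in the
1-dimensional `𝔽_q`-space `M_r ≅ 𝔽_q`).  Let `ζ, μ` be commuting endomorphisms of the
reduced formal group, with `ζ` noninvertible of the form `ζ(x) = ẑ(x^{q^s})` for an
invertible `ẑ`, and `μ` invertible.  If `(d, w) ∈ Z_r(ζ, μ)`, i.e.
`d(μ(x)) = d(x)·μ'(ζ(x)) + w(ζ(x))`, and `d(x) = -θ(ζ(x))` for some `θ ∈ x²·k[[x]]`,
then `w(x) = μ'(x)·θ(x) - θ(μ(x))`. -/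
theorem stmt_15 (p : ℕ) (hp : p.Prime) (f : ℕ) (hf : 1 ≤ f) (q : ℕ) (hq : q = p ^ f)
    (k : Type*) [Field k] [Fintype k] (hcard : Fintype.card k = q)
    (s : ℕ) (hs : 1 ≤ s)
    (zhat ζ μ d w θ : PowerSeries k)
    (hzhat0 : PowerSeries.coeff 0 zhat = 0) (hzhat1 : PowerSeries.coeff 1 zhat ≠ 0)
    (hζ : ζ = psComp zhat ((PowerSeries.X : PowerSeries k) ^ q ^ s))
    (hμ0 : PowerSeries.coeff 0 μ = 0) (hμ1 : PowerSeries.coeff 1 μ ≠ 0)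
    (hcomm : psComp ζ μ = psComp μ ζ)
    (hcocycle : psComp d μ = d * psComp (PowerSeries.derivativeFun μ) ζ + psComp w ζ)
    (hθ0 : PowerSeries.coeff 0 θ = 0) (hθ1 : PowerSeries.coeff 1 θ = 0)
    (hd : d = - psComp θ ζ) :
    w = PowerSeries.derivativeFun μ * θ - psComp θ μ := by
  have hq2 : 2 ≤ q := by
    rw [hq]
    calc 2 = 2 ^ 1 := (pow_one 2).symm
    _ ≤ p ^ 1 := Nat.pow_le_pow_left hp.two_le 1
    _ ≤ p ^ f := Nat.pow_le_pow_right (by have := hp.two_le; omega) hf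
  have hq1 : 1 ≤ q ^ s := Nat.one_le_pow _ _ (by omega)
  -- constant coefficient of ζ is zero
  have hζ0 : PowerSeries.constantCoeff ζ = 0 := by
    rw [hζ, constantCoeff_psComp, ← PowerSeries.coeff_zero_eq_constantCoeff_apply, hzhat0]
  have hμ0' : PowerSeries.constantCoeff μ = 0 := by
    rw [← PowerSeries.coeff_zero_eq_constantCoeff_apply]; exact hμ0
  -- ζ ≠ 0 : its coefficient at q^s is zhat₁ ≠ 0
  have hζne : ζ ≠ 0 := by
    intro hzero
    apply hzhat1
    have hc : PowerSeries.coeff (q ^ s) ζ = PowerSeries.coeff 1 zhat := by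
      rw [hζ, coeff_psComp]
      rw [Finset.sum_eq_single 1]
      · rw [pow_one, PowerSeries.coeff_X_pow, if_pos rfl, mul_one]
      · intro b hb hb1
        rw [← pow_mul, PowerSeries.coeff_X_pow, if_neg, mul_zero]
        intro hEq
        rcases Nat.lt_trichotomy b 1 with hb | hb | hb
        · have hb0 : b = 0 := by omega
          rw [hb0, mul_zero] at hEq
          omega
        · exact hb1 hb
        · have h2 : q ^ s * 2 ≤ q ^ s * b := Nat.mul_le_mul_left _ hb
          omega
      · intro hnot
        exact absurd (Finset.mem_range.mpr (by omega)) hnot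
    rw [hzero, map_zero] at hc
    exact hc.symm
  -- rewrite cocycle
  have key : psComp w ζ =
      psComp (PowerSeries.derivativeFun μ * θ - psComp θ μ) ζ := by
    have h1 : psComp d μ = - psComp (psComp θ μ) ζ := by
      rw [hd, psComp_neg, psComp_assoc hζ0 hμ0' θ, hcomm, ← psComp_assoc hμ0' hζ0 θ]
    have h2 : d * psComp (PowerSeries.derivativeFun μ) ζ =
        - psComp (PowerSeries.derivativeFun μ * θ) ζ := by
      rw [hd, psComp_mul hζ0]
      ring
    rw [h1, h2] at hcocycle
    rw [psComp_sub]
    linear_combination -hcocycle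
  have := psComp_eq_zero hζ0 hζne (f := w - (PowerSeries.derivativeFun μ * θ - psComp θ μ))
    (by rw [psComp_sub, key, sub_self])
  exact sub_eq_zero.mp this
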